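/- arXiv:1602.00247 — 2 statements merged into one kernel-verified Lean document; each statement's English description precedes it below -/
import Mathlib

section
/- Let ε > 0, c > 0 and let J : [0,1] → ℝ be measurable with r ↦ r³ J(r) integrable on [0,1]. Then (4π/((4π/3) ε³)) ∫₀^ε ∫_z^ε ∫₀^{arccos(z/ζ)} (c J(ζ/ε)/ε) ζ² sin φ dφ dζ dz = (3/2) c ∫₀¹ r³ J(r) dr. In particular, the left-hand side is independent of ε, and equals (2ω₂/ω₃) M c with M = ∫₀¹ r³ J(r) dr, ω₂ = π, ω₃ = 4π/3. -/
/-!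
On the cap the polar integral is `∫₀^{arccos(z/ζ)} sin φ dφ = 1 - z/ζ`, so the integrand becomes
`K(ζ) ζ (ζ - z)` with `K(ζ) = c J(ζ/ε)/ε`. Exchanging the order of integration over the triangle
`0 < z < ζ ≤ ε` turns the `z`-integral into `∫₀^ζ (ζ - z) dz = ζ²/2`, leaving
`(c/2ε) ∫₀^ε ζ³ J(ζ/ε) dζ`, and `ζ = εr` turns this into `(c ε³/2) ∫₀¹ r³ J(r) dr`.
Since `0 ≤ ζ - z ≤ ζ` on the triangle, Fubini needs nothing beyond the integrability of `r³ J(r)`.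
-/

open MeasureTheory Real Set

theorem intervalIntegrable_mul_pow_comp_div {f : ℝ → ℝ} {n : ℕ}
    (hf : IntervalIntegrable (fun r => r ^ n * f r) volume 0 1) (a : ℝ) :
    IntervalIntegrable (fun x => x ^ n * f (x / a)) volume 0 a := by
  rcases eq_or_ne a 0 with rfl | ha
  · exact IntervalIntegrable.refl
  have h := (hf.comp_mul_right (c := a⁻¹)).const_mul (a ^ n)
  simp only [zero_div, one_div, inv_inv] at h
  refine h.congr fun x _ => ?_
  simp only [← div_eq_mul_inv, div_pow]
  field_simp

theorem integral_comp_div_mul_pow (f : ℝ → ℝ) (n : ℕ) {a : ℝ} (ha : a ≠ 0) :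
    ∫ x in (0 : ℝ)..a, x ^ n * f (x / a) = a ^ (n + 1) * ∫ r in (0 : ℝ)..1, r ^ n * f r := by
  have hscale : ∀ x : ℝ, x ^ n * f (x / a) = a ^ n * ((x / a) ^ n * f (x / a)) := fun x => by
    rw [div_pow, ← mul_assoc, mul_div_cancel₀ _ (pow_ne_zero n ha)]
  simp_rw [hscale, intervalIntegral.integral_const_mul,
    intervalIntegral.integral_comp_div (fun r => r ^ n * f r) ha, zero_div, div_self ha,
    smul_eq_mul]
  ring

theorem integral_sub_left_zero (x : ℝ) : ∫ z in (0 : ℝ)..x, (x - z) = x ^ 2 / 2 := by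
  simp [intervalIntegral.integral_comp_sub_left (fun z => z) x]

theorem integral_sin_zero_arccos {x : ℝ} (h₁ : -1 ≤ x) (h₂ : x ≤ 1) :
    ∫ φ in (0 : ℝ)..arccos x, sin φ = 1 - x := by
  rw [integral_sin, cos_zero, cos_arccos h₁ h₂]

theorem sq_mul_integral_sin_zero_arccos_div {z ζ : ℝ} (hz : 0 ≤ z) (hzζ : z ≤ ζ) :
    ζ ^ 2 * ∫ φ in (0 : ℝ)..arccos (z / ζ), sin φ = ζ * (ζ - z) := by
  rcases (hz.trans hzζ).eq_or_lt with rfl | hζ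
  · simp
  · rw [integral_sin_zero_arccos (by linarith [div_nonneg hz hζ.le]) (div_le_one_of_le₀ hzζ hζ.le)]
    field_simp

theorem integral_integral_integral_sin_arccos {a : ℝ} (ha : 0 ≤ a) (K : ℝ → ℝ) :
    ∫ z in (0 : ℝ)..a, ∫ ζ in z..a, ∫ φ in (0 : ℝ)..arccos (z / ζ), K ζ * ζ ^ 2 * sin φ
      = ∫ z in (0 : ℝ)..a, ∫ ζ in z..a, K ζ * ζ * (ζ - z) := by
  refine intervalIntegral.integral_congr fun z hz => intervalIntegral.integral_congr fun ζ hζ => ?_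
  rw [uIcc_of_le ha] at hz
  rw [uIcc_of_le hz.2] at hζ
  rw [intervalIntegral.integral_const_mul, mul_assoc, sq_mul_integral_sin_zero_arccos_div hz.1 hζ.1]
  ring

def triangle (a : ℝ) : Set (ℝ × ℝ) := {p | 0 < p.1 ∧ p.1 < p.2 ∧ p.2 ≤ a}

theorem measurableSet_triangle (a : ℝ) : MeasurableSet (triangle a) :=
  (measurableSet_lt measurable_const measurable_fst).inter
    ((measurableSet_lt measurable_fst measurable_snd).inter
      (measurableSet_le measurable_snd measurable_const))

section
variable {E : Type*} [NormedAddCommGroup E] [NormedSpace ℝ E] {a : ℝ} (f : ℝ × ℝ → E)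

theorem integral_indicator_triangle_left (z : ℝ) :
    ∫ ζ, (triangle a).indicator f (z, ζ) =
      (Ioc 0 a).indicator (fun z => ∫ ζ in z..a, f (z, ζ)) z := by
  by_cases hz : z ∈ Ioc 0 a
  · rw [indicator_of_mem hz, intervalIntegral.integral_of_le hz.2,
      ← integral_indicator measurableSet_Ioc]
    congr with ζ
    simp [indicator_apply, triangle, hz.1]
  · rw [indicator_of_notMem hz, ← integral_zero ℝ E]
    congr with ζ
    refine indicator_of_notMem (fun h => hz ⟨h.1, h.2.1.le.trans h.2.2⟩) _

theorem integral_indicator_triangle_right (ζ : ℝ) :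
    ∫ z, (triangle a).indicator f (z, ζ) =
      (Ioc 0 a).indicator (fun ζ => ∫ z in 0..ζ, f (z, ζ)) ζ := by
  by_cases hζ : ζ ∈ Ioc 0 a
  · rw [indicator_of_mem hζ, intervalIntegral.integral_of_le hζ.1.le,
      integral_Ioc_eq_integral_Ioo, ← integral_indicator measurableSet_Ioo]
    congr with z
    simp [indicator_apply, triangle, hζ.2]
  · rw [indicator_of_notMem hζ, ← integral_zero ℝ E]
    congr with z
    refine indicator_of_notMem (fun h => hζ ⟨h.1.trans h.2.1, h.2.2⟩) _

variable {f}

theorem integral_triangle_eq_left (ha : 0 ≤ a) (hf : IntegrableOn f (triangle a)) :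
    ∫ p in triangle a, f p = ∫ z in 0..a, ∫ ζ in z..a, f (z, ζ) := by
  rw [← integral_indicator (measurableSet_triangle a), Measure.volume_eq_prod,
    integral_prod _ ((integrable_indicator_iff (measurableSet_triangle a)).2 hf)]
  simp_rw [integral_indicator_triangle_left]
  rw [integral_indicator measurableSet_Ioc, intervalIntegral.integral_of_le ha]

theorem integral_triangle_eq_right (ha : 0 ≤ a) (hf : IntegrableOn f (triangle a)) :
    ∫ p in triangle a, f p = ∫ ζ in 0..a, ∫ z in 0..ζ, f (z, ζ) := by
  rw [← integral_indicator (measurableSet_triangle a), Measure.volume_eq_prod,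
    integral_prod_symm _ ((integrable_indicator_iff (measurableSet_triangle a)).2 hf)]
  simp_rw [integral_indicator_triangle_right]
  rw [integral_indicator measurableSet_Ioc, intervalIntegral.integral_of_le ha]

end

section
variable {g : ℝ → ℝ} {a : ℝ}

theorem integral_mul_sub_zero (ζ : ℝ) : ∫ z in (0 : ℝ)..ζ, g ζ * (ζ - z) = ζ ^ 2 * g ζ / 2 := by
  rw [intervalIntegral.integral_const_mul, integral_sub_left_zero]
  ring

theorem integral_norm_mul_sub_zero {ζ : ℝ} (hζ : 0 ≤ ζ) :
    ∫ z in (0 : ℝ)..ζ, ‖g ζ * (ζ - z)‖ = ‖ζ ^ 2 * g ζ‖ / 2 := by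
  have hnorm : EqOn (fun z => ‖g ζ * (ζ - z)‖) (fun z => ‖g ζ‖ * (ζ - z)) (uIcc 0 ζ) := by
    intro z hz
    rw [uIcc_of_le hζ] at hz
    simp only [norm_mul, Real.norm_of_nonneg (sub_nonneg.2 hz.2)]
  rw [intervalIntegral.integral_congr hnorm, intervalIntegral.integral_const_mul,
    integral_sub_left_zero, norm_mul, norm_pow, Real.norm_of_nonneg hζ]
  ring

theorem integrableOn_triangle_mul_sub (hgm : Measurable g)
    (hg : IntegrableOn (fun ζ => ζ ^ 2 * g ζ) (Ioc 0 a)) :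
    IntegrableOn (fun p : ℝ × ℝ => g p.2 * (p.2 - p.1)) (triangle a) := by
  rw [← integrable_indicator_iff (measurableSet_triangle a), Measure.volume_eq_prod]
  refine (integrable_prod_iff' ?_).2 ⟨?_, ?_⟩
  · exact (((hgm.comp measurable_snd).mul (measurable_snd.sub measurable_fst)).indicator
      (measurableSet_triangle a)).aestronglyMeasurable
  · refine Filter.Eventually.of_forall fun ζ => ?_
    have hsection : (fun z => (z, ζ)) ⁻¹' triangle a ⊆ Icc 0 ζ :=
      fun z hz => ⟨hz.1.le, hz.2.1.le⟩
    simp_rw [← indicator_comp_right (fun z => (z, ζ))]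
    refine (integrable_indicator_iff
      ((measurableSet_triangle a).preimage measurable_prodMk_right)).2 ?_
    have hcont : Continuous fun z => g ζ * (ζ - z) := by fun_prop
    exact (hcont.integrableOn_Icc (μ := volume)).mono_set hsection
  · simp_rw [norm_indicator_eq_indicator_norm, integral_indicator_triangle_right]
    refine ((integrable_indicator_iff measurableSet_Ioc).2 (hg.norm.div_const 2)).congr
      (Filter.Eventually.of_forall fun ζ => ?_)
    by_cases hζ : ζ ∈ Ioc 0 a
    · simp only [indicator_of_mem hζ, integral_norm_mul_sub_zero hζ.1.le]
    · simp only [indicator_of_notMem hζ]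

theorem integral_integral_mul_sub (ha : 0 ≤ a) (hgm : Measurable g)
    (hg : IntegrableOn (fun ζ => ζ ^ 2 * g ζ) (Ioc 0 a)) :
    ∫ z in (0 : ℝ)..a, ∫ ζ in z..a, g ζ * (ζ - z) = (∫ ζ in (0 : ℝ)..a, ζ ^ 2 * g ζ) / 2 := by
  have hT := integrableOn_triangle_mul_sub hgm hg
  rw [← integral_triangle_eq_left ha hT, integral_triangle_eq_right ha hT]
  simp_rw [integral_mul_sub_zero]
  rw [intervalIntegral.integral_div]

end

theorem energy_release_rate_3d_general (ε : ℝ) (hε : 0 < ε) (c : ℝ)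
    (J : ℝ → ℝ) (hJm : Measurable J)
    (hJint : IntegrableOn (fun r : ℝ => r ^ 3 * J r) (Set.Icc (0 : ℝ) 1)) :
    (4 * π / ((4 * π / 3) * ε ^ 3)) *
        ∫ z in (0 : ℝ)..ε, ∫ ζ in z..ε, ∫ φ in (0 : ℝ)..(Real.arccos (z / ζ)),
          (c * J (ζ / ε) / ε) * ζ ^ 2 * Real.sin φ
      = (3 / 2) * c * ∫ r in Set.Icc (0 : ℝ) 1, r ^ 3 * J r ∧
    (3 / 2) * c * (∫ r in Set.Icc (0 : ℝ) 1, r ^ 3 * J r)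
      = (2 * π / (4 * π / 3)) * (∫ r in Set.Icc (0 : ℝ) 1, r ^ 3 * J r) * c := by
  have hM : ∫ r in Icc (0 : ℝ) 1, r ^ 3 * J r = ∫ r in (0 : ℝ)..1, r ^ 3 * J r := by
    rw [integral_Icc_eq_integral_Ioc, intervalIntegral.integral_of_le zero_le_one]
  have hmoment : IntegrableOn (fun ζ => ζ ^ 2 * (c * J (ζ / ε) / ε * ζ)) (Ioc 0 ε) := by
    have h := ((intervalIntegrable_mul_pow_comp_div
      ((intervalIntegrable_iff_integrableOn_Icc_of_le zero_le_one).2 hJint) ε).const_mul (c / ε))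
    rw [intervalIntegrable_iff_integrableOn_Ioc_of_le hε.le] at h
    exact h.congr_fun (fun ζ _ => by ring) measurableSet_Ioc
  have hscale : ∫ ζ in (0 : ℝ)..ε, ζ ^ 2 * (c * J (ζ / ε) / ε * ζ)
      = c * ε ^ 3 * ∫ r in (0 : ℝ)..1, r ^ 3 * J r := by
    calc _ = ∫ ζ in (0 : ℝ)..ε, c / ε * (ζ ^ 3 * J (ζ / ε)) := by congr with ζ; ring
      _ = c / ε * (ε ^ (3 + 1) * ∫ r in (0 : ℝ)..1, r ^ 3 * J r) := by
        rw [intervalIntegral.integral_const_mul, integral_comp_div_mul_pow J 3 hε.ne']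
      _ = _ := by field_simp
  rw [integral_integral_integral_sin_arccos hε.le,
    integral_integral_mul_sub hε.le (by fun_prop) hmoment, hscale, hM]
  constructor
  · field_simp
  · field_simp
    ring

/-- Three-dimensional spherical-coordinate evaluation of the critical
energy release rate:
`(4π/((4π/3)ε³)) ∫₀^ε ∫_z^ε ∫₀^{arccos(z/ζ)} (c J(ζ/ε)/ε) ζ² sin φ dφ dζ dz
  = (3/2) c ∫₀¹ r³ J(r) dr`,
independent of `ε`, and `(3/2) c M = (2ω₂/ω₃) M c` with `ω₂ = π`, `ω₃ = 4π/3`,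
`M = ∫₀¹ r³ J(r) dr`. -/
theorem energy_release_rate_3d (ε : ℝ) (hε : 0 < ε) (c : ℝ) (hc : 0 < c)
    (J : ℝ → ℝ) (hJm : Measurable J)
    (hJint : IntegrableOn (fun r : ℝ => r ^ 3 * J r) (Set.Icc (0 : ℝ) 1)) :
    (4 * π / ((4 * π / 3) * ε ^ 3)) *
        ∫ z in (0 : ℝ)..ε, ∫ ζ in z..ε, ∫ φ in (0 : ℝ)..(Real.arccos (z / ζ)),
          (c * J (ζ / ε) / ε) * ζ ^ 2 * Real.sin φ
      = (3 / 2) * c * ∫ r in Set.Icc (0 : ℝ) 1, r ^ 3 * J r ∧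
    (3 / 2) * c * (∫ r in Set.Icc (0 : ℝ) 1, r ^ 3 * J r)
      = (2 * π / (4 * π / 3)) * (∫ r in Set.Icc (0 : ℝ) 1, r ^ 3 * J r) * c :=
  energy_release_rate_3d_general ε hε c J hJm hJint
end

section
/- Let d ≥ 2, ε > 0, x ∈ ℝ^d, n a unit vector, and set H⁻ = {y ∈ B_ε(x) : (y−x)·n < 0}. Let J : [0,1] → [0,∞) be measurable and let Ψ : [0,∞) → ℝ be twice continuously differentiable such that there exists r_c > 0 with Ψ'(r) + 2rΨ''(r) ≥ 0 for all 0 ≤ r ≤ r_c. Let u* : ℝ^d → ℝ^d be measurable, let S(y) = ((u*(y) − u*(x))·e)/|y−x| with e = (y−x)/|y−x| denote the bond strain, and suppose the function y ↦ (1/|y−x|)(2J(|y−x|/ε)/ε)(Ψ'(r(y)) + 2 r(y) Ψ''(r(y))) with r(y) = |y−x| S(y)² is integrable on H⁻. Define the stability tensor A_n(x) = ∫_{H⁻} (1/|y−x|)(2J(|y−x|/ε)/ε)(Ψ'(r(y)) + 2 r(y) Ψ''(r(y))) e ⊗ e dy. If there exists a nonzero vector w ∈ ℝ^d with w · A_n(x)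 w < 0 (in particular, if A_n(x) has a negative eigenvalue), then the set {y ∈ H⁻ : |y−x| S(y)² > r_c} — equivalently the set of bonds with |S(y)| > S_c(y) = √(r_c/|y−x|) — has positive Lebesgue measure. -/
open MeasureTheory Matrix
open scoped RealInnerProductSpace

/-! The quadratic form of the stability tensor is `w·A w = ∫_{H⁻} f(y) (e(y)·w)² dy`. At a
subcritical bond the weight `f(y)` is nonnegative, because `J ≥ 0` on `[0, 1]` and
`Ψ'(r) + 2rΨ''(r) ≥ 0` on `[0, r_c]`. If the supercritical bonds formed a null set, the integrand
would be nonnegative almost everywhere on `H⁻`, contradicting `w·A w < 0`. -/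

theorem norm_inv_norm_smul_le_one {E : Type*} [NormedAddCommGroup E] [NormedSpace ℝ E] (v : E) :
    ‖‖v‖⁻¹ • v‖ ≤ 1 := by
  rcases eq_or_ne v 0 with rfl | hv
  · simp
  · exact (norm_smul_inv_norm hv).le

theorem dotProduct_smul_vecMulVec_self_mulVec {ι : Type*} [Fintype ι] (c : ℝ) (v w : ι → ℝ) :
    w ⬝ᵥ (c • vecMulVec v v) *ᵥ w = c * (v ⬝ᵥ w) ^ 2 := by
  rw [smul_mulVec, vecMulVec_mulVec, dotProduct_smul, dotProduct_smul]
  simp only [MulOpposite.smul_eq_mul_unop, MulOpposite.unop_op, smul_eq_mul, dotProduct_comm w v]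
  ring

theorem dotProduct_mulVec_eq_integral {α ι : Type*} [MeasurableSpace α] {μ : Measure α}
    [Fintype ι] {A : Matrix ι ι ℝ} {G : α → Matrix ι ι ℝ}
    (hG : ∀ i j, Integrable (fun a => G a i j) μ) (hA : ∀ i j, A i j = ∫ a, G a i j ∂μ)
    (w : ι → ℝ) :
    w ⬝ᵥ A *ᵥ w = ∫ a, w ⬝ᵥ G a *ᵥ w ∂μ := by
  simp only [dotProduct, mulVec, hA, Finset.mul_sum]
  rw [integral_finsetSum _ fun i _ => integrable_finsetSum _ fun j _ =>
    ((hG i j).mul_const _).const_mul _]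
  refine Finset.sum_congr rfl fun i _ => ?_
  rw [integral_finsetSum _ fun j _ => ((hG i j).mul_const _).const_mul _]
  refine Finset.sum_congr rfl fun j _ => ?_
  rw [integral_const_mul, integral_mul_const]

theorem measure_inter_pos_of_setIntegral_neg {α : Type*} [MeasurableSpace α] {μ : Measure α}
    {s t : Set α} {g : α → ℝ} (hs : MeasurableSet s) (hg : ∀ a ∈ s, a ∉ t → 0 ≤ g a)
    (hneg : ∫ a in s, g a ∂μ < 0) : 0 < μ (s ∩ t) := by
  refine pos_iff_ne_zero.2 fun hnull => hneg.not_ge (setIntegral_nonneg_of_ae_restrict ?_)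
  filter_upwards [ae_restrict_mem hs, ae_restrict_of_ae (measure_eq_zero_iff_ae_notMem.1 hnull)]
    with a has hast
  exact hg a has fun hat => hast ⟨has, hat⟩

theorem bondStiffness_nonneg_of_subcritical {J Ψ : ℝ → ℝ} {ε r_c ρ r : ℝ}
    (hJ : ∀ t ∈ Set.Icc (0 : ℝ) 1, 0 ≤ J t)
    (hstab : ∀ r : ℝ, 0 ≤ r → r ≤ r_c → 0 ≤ deriv Ψ r + 2 * r * deriv (deriv Ψ) r)
    (hρ : 0 ≤ ρ) (hρε : ρ < ε) (hr : 0 ≤ r) (hrc : r ≤ r_c) :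
    0 ≤ 1 / ρ * (2 * J (ρ / ε) / ε) * (deriv Ψ r + 2 * r * deriv (deriv Ψ) r) := by
  have hε : 0 < ε := hρ.trans_lt hρε
  have hJρ : 0 ≤ J (ρ / ε) := hJ _ ⟨div_nonneg hρ hε.le, (div_le_one hε).2 hρε.le⟩
  have := hstab r hr hrc
  positivity

theorem instability_implies_supercritical_bonds_general (d : ℕ)
    (ε : ℝ)
    (x : EuclideanSpace ℝ (Fin d)) (n : EuclideanSpace ℝ (Fin d))
    (J : ℝ → ℝ) (hJnn : ∀ r ∈ Set.Icc (0 : ℝ) 1, 0 ≤ J r)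
    (Ψ : ℝ → ℝ)
    (r_c : ℝ)
    (hstab : ∀ r : ℝ, 0 ≤ r → r ≤ r_c → 0 ≤ deriv Ψ r + 2 * r * deriv (deriv Ψ) r)
    (S : EuclideanSpace ℝ (Fin d) → ℝ)
    (f : EuclideanSpace ℝ (Fin d) → ℝ)
    (hf : ∀ y, f y =
      (1 / ‖y - x‖) * (2 * J (‖y - x‖ / ε) / ε) *
        (deriv Ψ (‖y - x‖ * (S y) ^ 2)
          + 2 * (‖y - x‖ * (S y) ^ 2) * deriv (deriv Ψ) (‖y - x‖ * (S y) ^ 2)))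
    (hfint : IntegrableOn f
      {y : EuclideanSpace ℝ (Fin d) | y ∈ Metric.ball x ε ∧ ⟪y - x, n⟫ < 0} volume)
    (A : Matrix (Fin d) (Fin d) ℝ)
    (hA : ∀ i j, A i j =
      ∫ y in {y : EuclideanSpace ℝ (Fin d) | y ∈ Metric.ball x ε ∧ ⟪y - x, n⟫ < 0},
        f y * ((‖y - x‖⁻¹ • (y - x)) i) * ((‖y - x‖⁻¹ • (y - x)) j))
    (w : Fin d → ℝ) (hneg : w ⬝ᵥ A.mulVec w < 0) :
    0 < volume {y : EuclideanSpace ℝ (Fin d) |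
        (y ∈ Metric.ball x ε ∧ ⟪y - x, n⟫ < 0) ∧ r_c < ‖y - x‖ * (S y) ^ 2} := by
  set D := {y : EuclideanSpace ℝ (Fin d) | y ∈ Metric.ball x ε ∧ ⟪y - x, n⟫ < 0}
  set e : EuclideanSpace ℝ (Fin d) → Fin d → ℝ := fun y => ⇑(‖y - x‖⁻¹ • (y - x))
  have hD : MeasurableSet D :=
    (Metric.isOpen_ball.inter (isOpen_lt (f := fun y => ⟪y - x, n⟫) (by fun_prop)
      continuous_const)).measurableSet
  have he_meas : ∀ i, Measurable fun y => e y i := fun i => by fun_prop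
  have he_le : ∀ y i, ‖e y i‖ ≤ 1 := fun y i =>
    (PiLp.norm_apply_le _ i).trans (norm_inv_norm_smul_le_one _)
  have hint : ∀ i j, IntegrableOn (fun y => (f y • vecMulVec (e y) (e y)) i j) D := by
    intro i j
    simp only [Matrix.smul_apply, vecMulVec_apply, smul_eq_mul, ← mul_assoc]
    exact (hfint.mul_bdd (he_meas i).aestronglyMeasurable (ae_of_all _ (he_le · i))).mul_bdd
      (he_meas j).aestronglyMeasurable (ae_of_all _ (he_le · j))
  have hquad : w ⬝ᵥ A *ᵥ w = ∫ y in D, f y * (e y ⬝ᵥ w) ^ 2 := by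
    rw [dotProduct_mulVec_eq_integral hint fun i j => by
      simp only [hA, Matrix.smul_apply, vecMulVec_apply, smul_eq_mul, mul_assoc]; rfl]
    simp only [dotProduct_smul_vecMulVec_self_mulVec]
  refine measure_inter_pos_of_setIntegral_neg hD (fun y hy hsub => ?_) (hquad ▸ hneg)
  rw [hf y]
  refine mul_nonneg (bondStiffness_nonneg_of_subcritical hJnn hstab (norm_nonneg _) ?_
    (by positivity) (not_lt.1 hsub)) (sq_nonneg _)
  simpa [dist_eq_norm] using hy.1

/-- If the peridynamic stability tensor
`A_n(x) = ∫_{H⁻} (1/|y−x|)(2J(|y−x|/ε)/ε)(Ψ'(r(y)) + 2r(y)Ψ''(r(y))) e⊗e dy`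
(with `H⁻` the half-neighborhood `{y ∈ B_ε(x) : (y−x)·n < 0}`, bond strain
`S(y) = ((u*(y)−u*(x))·e)/|y−x|`, `e = (y−x)/|y−x|`, `r(y) = |y−x|S(y)²`) has a direction
`w ≠ 0` with `w·A_n(x)w < 0`, and `Ψ'(r) + 2rΨ''(r) ≥ 0 for 0 ≤ r ≤ r_c`, then the set of
bonds strained beyond critical, `{y ∈ H⁻ : |y−x|S(y)² > r_c}`, has positive Lebesgue
measure. -/
theorem instability_implies_supercritical_bonds (d : ℕ) (hd : 2 ≤ d)
    (ε : ℝ) (hε : 0 < ε)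
    (x : EuclideanSpace ℝ (Fin d)) (n : EuclideanSpace ℝ (Fin d)) (hn : ‖n‖ = 1)
    (J : ℝ → ℝ) (hJm : Measurable J) (hJnn : ∀ r ∈ Set.Icc (0 : ℝ) 1, 0 ≤ J r)
    (Ψ : ℝ → ℝ) (hΨ : ContDiff ℝ 2 Ψ)
    (r_c : ℝ) (hrc : 0 < r_c)
    (hstab : ∀ r : ℝ, 0 ≤ r → r ≤ r_c → 0 ≤ deriv Ψ r + 2 * r * deriv (deriv Ψ) r)
    (ustar : EuclideanSpace ℝ (Fin d) → EuclideanSpace ℝ (Fin d)) (hu : Measurable ustar)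
    (S : EuclideanSpace ℝ (Fin d) → ℝ)
    (hS : ∀ y, S y = ⟪ustar y - ustar x, ‖y - x‖⁻¹ • (y - x)⟫ / ‖y - x‖)
    (f : EuclideanSpace ℝ (Fin d) → ℝ)
    (hf : ∀ y, f y =
      (1 / ‖y - x‖) * (2 * J (‖y - x‖ / ε) / ε) *
        (deriv Ψ (‖y - x‖ * (S y) ^ 2)
          + 2 * (‖y - x‖ * (S y) ^ 2) * deriv (deriv Ψ) (‖y - x‖ * (S y) ^ 2)))
    (hfint : IntegrableOn f
      {y : EuclideanSpace ℝ (Fin d) | y ∈ Metric.ball x ε ∧ ⟪y - x, n⟫ < 0} volume)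
    (A : Matrix (Fin d) (Fin d) ℝ)
    (hA : ∀ i j, A i j =
      ∫ y in {y : EuclideanSpace ℝ (Fin d) | y ∈ Metric.ball x ε ∧ ⟪y - x, n⟫ < 0},
        f y * ((‖y - x‖⁻¹ • (y - x)) i) * ((‖y - x‖⁻¹ • (y - x)) j))
    (w : Fin d → ℝ) (hw : w ≠ 0) (hneg : w ⬝ᵥ A.mulVec w < 0) :
    0 < volume {y : EuclideanSpace ℝ (Fin d) |
        (y ∈ Metric.ball x ε ∧ ⟪y - x, n⟫ < 0) ∧ r_c < ‖y - x‖ * (S y) ^ 2} :=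
  instability_implies_supercritical_bonds_general d ε x n J hJnn Ψ r_c hstab S f hf hfint A hA w
    hneg
end
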